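/- arXiv:2602.09006 — 4 statements merged into one kernel-verified Lean document; each statement's English description precedes it below -/
import Mathlib

section
/- Let M ∈ ℝ^{m×n} with singular value decomposition M = U S Vᵀ, where U ∈ ℝ^{m×m} is orthogonal, S = diag(σ₁,…,σ_m) with all σ_i > 0, and V ∈ ℝ^{n×m} has orthonormal columns. Define the row-normalization map f_RN(X) = √n · Q(X)^{-1} X where Q(X) = diag(‖X_{1,:}‖₂,…,‖X_{m,:}‖₂). Then U f_RN(Uᵀ M) = √n · U Vᵀ; i.e., rotating by the left singular vectors and applying row normalization recovers (a scalar multiple of) the orthogonalized gradient U Vᵀ. -/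
open Matrix

/-- The row-normalization map `f_RN(X) = √n · Q(X)⁻¹ X` where
`Q(X) = diag(‖X_{1,:}‖₂, …, ‖X_{m,:}‖₂)`. -/
noncomputable def fRN {m n : ℕ} (X : Matrix (Fin m) (Fin n) ℝ) :
    Matrix (Fin m) (Fin n) ℝ :=
  Real.sqrt n • ((Matrix.diagonal fun i => Real.sqrt (∑ j, (X i j) ^ 2))⁻¹ * X)

/-- If `M = U S Vᵀ` with `U` orthogonal, `S = diag(σ)` with all `σ i > 0`, and `V` having
orthonormal columns, then `U f_RN(Uᵀ M) = √n · U Vᵀ`: rotating by the left singular vectors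
and applying row normalization recovers the orthogonalized gradient. -/
theorem stmt4 {m n : ℕ}
    (U : Matrix (Fin m) (Fin m) ℝ) (σ : Fin m → ℝ) (V : Matrix (Fin n) (Fin m) ℝ)
    (hU : Uᵀ * U = 1) (hσ : ∀ i, 0 < σ i) (hV : Vᵀ * V = 1)
    (M : Matrix (Fin m) (Fin n) ℝ)
    (hM : M = U * Matrix.diagonal σ * Vᵀ) :
    U * fRN (Uᵀ * M) = Real.sqrt n • (U * Vᵀ) := by
  have hUM : Uᵀ * M = Matrix.diagonal σ * Vᵀ := by
    rw [hM, ← Matrix.mul_assoc, ← Matrix.mul_assoc, hU, Matrix.one_mul]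
  have hnorm : (fun i => Real.sqrt (∑ j, ((Uᵀ * M) i j) ^ 2)) = σ := by
    funext i
    have hcol : ∑ j, (V j i) ^ 2 = 1 := by
      have := congrFun (congrFun hV i) i
      simpa [Matrix.mul_apply, Matrix.one_apply, pow_two] using this
    have : ∑ j, ((Uᵀ * M) i j) ^ 2 = (σ i) ^ 2 := by
      simp only [hUM, Matrix.diagonal_mul, Matrix.transpose_apply, mul_pow]
      rw [← Finset.mul_sum, hcol, mul_one]
    rw [this, Real.sqrt_sq (hσ i).le]
  have hdet : IsUnit (Matrix.diagonal σ).det := by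
    rw [Matrix.det_diagonal]
    exact (Finset.prod_pos fun i _ => hσ i).ne'.isUnit
  have hfRN : fRN (Uᵀ * M) = Real.sqrt n • Vᵀ := by
    rw [fRN, hnorm, hUM, Matrix.nonsing_inv_mul_cancel_left _ _ hdet]
  rw [hfRN, Matrix.mul_smul]
end

section
/- Let G ∈ ℝ^{m×n} and A ∈ ℝ^{n×m} be such that GA has singular value decomposition GA = U Σ Vᵀ. Then R* = U Vᵀ maximizes tr(G A Rᵀ) over all orthogonal matrices R ∈ O(m), and the maximal value equals the sum of the singular values of GA (its nuclear norm). -/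
open Matrix

lemma diag_le_one {m : ℕ} (Z : Matrix (Fin m) (Fin m) ℝ) (h : Zᵀ * Z = 1)
    (i : Fin m) : Z i i ≤ 1 := by
  have h1 : ∑ j, Z j i * Z j i = 1 := by
    have := congrFun (congrFun h i) i
    simpa [Matrix.mul_apply, Matrix.transpose_apply, Matrix.one_apply] using this
  have h2 : Z i i * Z i i ≤ 1 := by
    rw [← h1]
    exact Finset.single_le_sum (f := fun j => Z j i * Z j i)
      (fun j _ => mul_self_nonneg _) (Finset.mem_univ i)
  have := abs_le_one_iff_mul_self_le_one.mpr h2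
  linarith [neg_abs_le (Z i i), le_abs_self (Z i i)]

/-- Orthogonal Procrustes: if `G A = U Σ Vᵀ` is a singular value decomposition, then
`R* = U Vᵀ` maximizes `tr(G A Rᵀ)` over all orthogonal `R`, and the maximum value equals
the sum of the singular values of `G A` (its nuclear norm). -/
theorem stmt5 {m n : ℕ} (G : Matrix (Fin m) (Fin n) ℝ) (A : Matrix (Fin n) (Fin m) ℝ)
    (U V : Matrix (Fin m) (Fin m) ℝ) (σ : Fin m → ℝ)
    (hU : Uᵀ * U = 1) (hV : Vᵀ * V = 1) (hσ : ∀ i, 0 ≤ σ i)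
    (hsvd : G * A = U * Matrix.diagonal σ * Vᵀ) :
    (∀ R : Matrix (Fin m) (Fin m) ℝ, Rᵀ * R = 1 →
      Matrix.trace (G * A * Rᵀ) ≤ Matrix.trace (G * A * (U * Vᵀ)ᵀ)) ∧
    Matrix.trace (G * A * (U * Vᵀ)ᵀ) = ∑ i, σ i := by
  have hUU : U * Uᵀ = 1 := mul_eq_one_comm.mp hU
  have hVV : V * Vᵀ = 1 := mul_eq_one_comm.mp hV
  -- value at R* = U Vᵀ
  have hval : Matrix.trace (G * A * (U * Vᵀ)ᵀ) = ∑ i, σ i := by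
    rw [hsvd]
    have : U * Matrix.diagonal σ * Vᵀ * (U * Vᵀ)ᵀ = U * Matrix.diagonal σ * Uᵀ := by
      rw [Matrix.transpose_mul, Matrix.transpose_transpose]
      calc U * Matrix.diagonal σ * Vᵀ * (V * Uᵀ)
          = U * Matrix.diagonal σ * (Vᵀ * V) * Uᵀ := by
            simp only [Matrix.mul_assoc]
        _ = U * Matrix.diagonal σ * Uᵀ := by rw [hV]; simp [Matrix.mul_assoc]
    rw [this, Matrix.trace_mul_comm, ← Matrix.mul_assoc, hU, Matrix.one_mul,
      Matrix.trace_diagonal]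
  refine ⟨fun R hR => ?_, hval⟩
  rw [hval]
  -- trace(G A Rᵀ) = ∑ σ i * Z i i with Z = Vᵀ Rᵀ U
  set Z := Vᵀ * Rᵀ * U with hZ
  have hZorth : Zᵀ * Z = 1 := by
    have hRR : R * Rᵀ = 1 := mul_eq_one_comm.mp hR
    rw [hZ]
    simp only [Matrix.transpose_mul, Matrix.transpose_transpose]
    calc Uᵀ * (R * V) * (Vᵀ * Rᵀ * U)
        = Uᵀ * (R * ((V * Vᵀ) * Rᵀ)) * U := by
          simp only [Matrix.mul_assoc]
      _ = 1 := by rw [hVV, Matrix.one_mul, hRR, Matrix.mul_one, hU]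
  have htr : Matrix.trace (G * A * Rᵀ) = ∑ i, σ i * Z i i := by
    rw [hsvd]
    have : Matrix.trace (U * Matrix.diagonal σ * Vᵀ * Rᵀ)
        = Matrix.trace (Matrix.diagonal σ * Z) := by
      calc (U * Matrix.diagonal σ * Vᵀ * Rᵀ).trace
          = (U * (Matrix.diagonal σ * Vᵀ * Rᵀ)).trace := by
            simp only [Matrix.mul_assoc]
        _ = ((Matrix.diagonal σ * Vᵀ * Rᵀ) * U).trace := Matrix.trace_mul_comm _ _
        _ = (Matrix.diagonal σ * Z).trace := by rw [hZ]; simp only [Matrix.mul_assoc]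
    rw [this, Matrix.trace]
    simp [Matrix.diag, Matrix.diagonal_mul]
  rw [htr]
  apply Finset.sum_le_sum
  intro i _
  calc σ i * Z i i ≤ σ i * 1 := mul_le_mul_of_nonneg_left (diag_le_one Z hZorth i) (hσ i)
    _ = σ i := mul_one _
end

section
/- Let (X, Y) be standard bivariate normal with correlation ρ ∈ (-1, 1). Then P(X > 0, Y > 0) = 1/4 + arcsin(ρ)/(2π). -/
/-!
Write `ρ = sin α` with `|α| < π / 2`. In polar coordinates `(U, V) = (r cos θ, r sin θ)` the
event reads `0 < r cos θ ∧ 0 < r sin (θ + α)`, i.e. `θ ∈ (-α, π / 2)`. The standard Gaussian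
density on `ℝ²` is radial, so the mass of a set cut out by a condition on `θ` alone is a fixed
constant times the length of the angular interval; the whole plane has mass `1` and angle
`2π`, so the probability is `(π / 2 + α) / (2π)`.
-/

open ProbabilityTheory MeasureTheory

open Real Set

lemma Real.cos_pos_iff_of_mem_Ioo {θ : ℝ} (hθ : θ ∈ Ioo (-π) π) :
    0 < cos θ ↔ θ ∈ Ioo (-(π / 2)) (π / 2) := by
  refine ⟨fun hcos => ⟨?_, ?_⟩, cos_pos_of_mem_Ioo⟩
  · by_contra! h
    have := cos_nonpos_of_pi_div_two_le_of_le (x := -θ) (by linarith) (by linarith [hθ.1])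
    rw [cos_neg] at this
    linarith
  · by_contra! h
    linarith [cos_nonpos_of_pi_div_two_le_of_le h (by linarith [hθ.2])]

lemma Real.sin_pos_iff_of_mem_Ioo {x : ℝ} (hx : x ∈ Ioo (-π) π) : 0 < sin x ↔ 0 < x := by
  refine ⟨fun hsin => ?_, fun h => sin_pos_of_pos_of_lt_pi h hx.2⟩
  by_contra! h
  linarith [sin_nonpos_of_nonpos_of_neg_pi_le h hx.1.le]

-- Points on the closed negative `x`-half-axis (a null set) are not constrained.
def IsAngularSector (s : Set (ℝ × ℝ)) (I : Set ℝ) : Prop :=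
  ∀ p ∈ polarCoord.target, polarCoord.symm p ∈ s ↔ p.2 ∈ I

lemma isAngularSector_wedge {α : ℝ} (hα : α ∈ Ioo (-(π / 2)) (π / 2)) :
    IsAngularSector {p | 0 < p.1 ∧ 0 < sin α * p.1 + cos α * p.2} (Ioo (-α) (π / 2)) := by
  rintro ⟨r, θ⟩ ⟨hr : 0 < r, hθ : θ ∈ Ioo (-π) π⟩
  have hrot : sin α * (r * cos θ) + cos α * (r * sin θ) = r * sin (θ + α) := by
    rw [sin_add]; ring
  simp only [polarCoord_symm_apply, mem_ofPred_eq, hrot, mul_pos_iff_of_pos_left hr,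
    cos_pos_iff_of_mem_Ioo hθ]
  constructor
  · rintro ⟨hθ', hsin⟩
    rw [sin_pos_iff_of_mem_Ioo ⟨by linarith [hθ'.1, hα.1], by linarith [hθ'.2, hα.2]⟩] at hsin
    exact ⟨by linarith, hθ'.2⟩
  · rintro ⟨hlo, hhi⟩
    exact ⟨⟨by linarith [hα.2], hhi⟩, sin_pos_of_pos_of_lt_pi (by linarith) (by linarith [hα.2])⟩

theorem withDensity_radial_apply_of_isAngularSector {g : ℝ → ENNReal} (hg : Measurable g)
    {s : Set (ℝ × ℝ)} {I : Set ℝ} (hs : MeasurableSet s) (hI : MeasurableSet I)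
    (hI_sub : I ⊆ Ioo (-π) π) (hsI : IsAngularSector s I) :
    volume.withDensity (fun p : ℝ × ℝ => g (p.1 ^ 2 + p.2 ^ 2)) s
      = (∫⁻ r in Ioi 0, ENNReal.ofReal r * g (r ^ 2)) * volume I := by
  have hT : Ioi 0 ×ˢ I ⊆ polarCoord.target := by
    rw [polarCoord_target]; exact prod_mono subset_rfl hI_sub
  calc volume.withDensity (fun p : ℝ × ℝ => g (p.1 ^ 2 + p.2 ^ 2)) s
      = ∫⁻ p in polarCoord.target, ENNReal.ofReal p.1 •
          s.indicator (fun q : ℝ × ℝ => g (q.1 ^ 2 + q.2 ^ 2)) (polarCoord.symm p) := by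
        rw [withDensity_apply _ hs, ← lintegral_indicator hs, lintegral_comp_polarCoord_symm]
    _ = ∫⁻ p in polarCoord.target, (Ioi 0 ×ˢ I).indicator
          (fun q : ℝ × ℝ => ENNReal.ofReal q.1 * g (q.1 ^ 2)) p := by
        refine setLIntegral_congr_fun polarCoord.open_target.measurableSet fun p hp => ?_
        have hr : p.1 ∈ Ioi 0 := by rw [polarCoord_target] at hp; exact hp.1
        have hsq : (p.1 * cos p.2) ^ 2 + (p.1 * sin p.2) ^ 2 = p.1 ^ 2 := by
          linear_combination p.1 ^ 2 * cos_sq_add_sin_sq p.2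
        by_cases hp2 : p.2 ∈ I
        · rw [indicator_of_mem ((hsI p hp).2 hp2),
            indicator_of_mem (show p ∈ Ioi 0 ×ˢ I from ⟨hr, hp2⟩), polarCoord_symm_apply, hsq,
            smul_eq_mul]
        · rw [indicator_of_notMem (mt (hsI p hp).1 hp2),
            indicator_of_notMem (fun h => hp2 h.2), smul_zero]
    _ = ∫⁻ p in Ioi 0 ×ˢ I, ENNReal.ofReal p.1 * g (p.1 ^ 2) * (fun _ => 1) p.2 := by
        rw [setLIntegral_indicator (measurableSet_Ioi.prod hI), inter_eq_left.2 hT]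
        simp only [mul_one]
    _ = (∫⁻ r in Ioi 0, ENNReal.ofReal r * g (r ^ 2)) * volume I := by
        rw [Measure.volume_eq_prod, ← Measure.prod_restrict,
          lintegral_prod_mul (f := fun r => ENNReal.ofReal r * g (r ^ 2)) (by fun_prop)
            aemeasurable_const, setLIntegral_const, one_mul]

lemma gaussianReal_prod_gaussianReal_eq_withDensity :
    (gaussianReal 0 1).prod (gaussianReal 0 1) = volume.withDensity
      (fun p : ℝ × ℝ => ENNReal.ofReal ((2 * π)⁻¹ * exp (-(p.1 ^ 2 + p.2 ^ 2) / 2))) := by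
  rw [gaussianReal_of_var_ne_zero _ one_ne_zero,
    prod_withDensity (measurable_gaussianPDF 0 1) (measurable_gaussianPDF 0 1),
    ← Measure.volume_eq_prod]
  congr with p
  rw [gaussianPDF, gaussianPDF, ← ENNReal.ofReal_mul (gaussianPDFReal_nonneg _ _ _)]
  congr 1
  simp only [gaussianPDFReal, NNReal.coe_one, mul_one, sub_zero]
  rw [mul_mul_mul_comm, ← exp_add, ← mul_inv, mul_self_sqrt (by positivity)]
  ring_nf

theorem gaussianReal_prod_gaussianReal_apply_of_isAngularSector {s : Set (ℝ × ℝ)} {I : Set ℝ}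
    (hs : MeasurableSet s) (hI : MeasurableSet I) (hI_sub : I ⊆ Ioo (-π) π)
    (hsI : IsAngularSector s I) :
    (gaussianReal 0 1).prod (gaussianReal 0 1) s = volume I / ENNReal.ofReal (2 * π) := by
  have hg : Measurable fun t : ℝ => ENNReal.ofReal ((2 * π)⁻¹ * exp (-t / 2)) := by fun_prop
  have hc := withDensity_radial_apply_of_isAngularSector hg MeasurableSet.univ measurableSet_Ioo
    subset_rfl fun p hp => iff_of_true (mem_univ _) hp.2
  rw [← gaussianReal_prod_gaussianReal_eq_withDensity, measure_univ, volume_Ioo, sub_neg_eq_add,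
    ← two_mul] at hc
  rw [gaussianReal_prod_gaussianReal_eq_withDensity,
    withDensity_radial_apply_of_isAngularSector hg hs hI hI_sub hsI,
    ENNReal.eq_inv_of_mul_eq_one_left hc.symm, ENNReal.div_eq_inv_mul]

/-- Sheppard's formula: if `(X, Y)` is standard bivariate normal with correlation
`ρ ∈ (−1, 1)` — realized as `X = U`, `Y = ρ U + √(1−ρ²) V` with `(U, V)` independent
standard normals — then `P(X > 0, Y > 0) = 1/4 + arcsin ρ / (2π)`. -/
theorem stmt13 (ρ : ℝ) (hρ : ρ ∈ Set.Ioo (-1 : ℝ) 1) :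
    ((gaussianReal 0 1).prod (gaussianReal 0 1))
        {p : ℝ × ℝ | 0 < p.1 ∧ 0 < ρ * p.1 + Real.sqrt (1 - ρ ^ 2) * p.2}
      = ENNReal.ofReal (1 / 4 + Real.arcsin ρ / (2 * Real.pi)) := by
  set α := arcsin ρ
  have hα : α ∈ Ioo (-(π / 2)) (π / 2) :=
    ⟨neg_pi_div_two_lt_arcsin.2 hρ.1, arcsin_lt_pi_div_two.2 hρ.2⟩
  have hS : MeasurableSet {p : ℝ × ℝ | 0 < p.1 ∧ 0 < sin α * p.1 + cos α * p.2} :=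
    (measurableSet_lt measurable_const measurable_fst).inter
      (measurableSet_lt measurable_const
        ((measurable_const.mul measurable_fst).add (measurable_const.mul measurable_snd)))
  have hsin : sin α = ρ := sin_arcsin hρ.1.le hρ.2.le
  have hcos : cos α = √(1 - ρ ^ 2) := cos_arcsin ρ
  rw [← hcos, ← hsin,
    gaussianReal_prod_gaussianReal_apply_of_isAngularSector hS measurableSet_Ioo
      (Ioo_subset_Ioo (by linarith [hα.2, pi_pos]) (by linarith [pi_pos]))
      (isAngularSector_wedge hα),
    volume_Ioo, ← ENNReal.ofReal_div_of_pos (by positivity)]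
  congr 1
  field_simp
  ring
end

section
/- Let Ḡ, M ∈ ℝ^{m×n} with M ≠ 0, and let V = R f(RᵀM) for some orthogonal R and some map f with f(RᵀM) ≠ 0. Define c = tr(ḠᵀM)/(‖Ḡ‖_F ‖M‖_F) and k = tr(M f(RᵀM)ᵀ Rᵀ)/(‖M‖_F ‖f(RᵀM)‖_F), and assume k ≥ 0. If c < −1/√(1+k²), then ⟨Ḡ, V⟩ = tr(Ḡᵀ V) < 0. -/
open Matrix

/-!
Write `Ḡ = α M + Ḡ⊥` with `Ḡ⊥ ⊥ M`; then `‖Ḡ⊥‖ = ‖Ḡ‖ √(1 - c²)`. As `R` is orthogonal,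
`‖V‖ = ‖f(Rᵀ M)‖`, so `k` is the cosine between `M` and `V`, and Cauchy–Schwarz on `⟨Ḡ⊥, V⟩` gives
`⟨Ḡ, V⟩ ≤ ‖Ḡ‖ ‖V‖ (c k + √(1 - c²))`. Since `-1 ≤ c < -1/√(1 + k²)` and `k ≥ 0`, we get
`c² k² > 1 - c²` with `c k < 0`, so the bracket is negative.
All of this happens in the Euclidean space of flattened matrices, whose inner product is
`tr(Aᵀ B)` and whose norm is `frob`.
-/

noncomputable def frob {m n : ℕ} (X : Matrix (Fin m) (Fin n) ℝ) : ℝ :=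
  Real.sqrt (∑ i, ∑ j, (X i j) ^ 2)

open scoped RealInnerProductSpace

lemma mul_add_sqrt_one_sub_sq_neg {c k : ℝ} (hk : 0 ≤ k) (hc₁ : -1 ≤ c)
    (hc : c < -1 / √(1 + k ^ 2)) : c * k + √(1 - c ^ 2) < 0 := by
  have hs : 0 < √(1 + k ^ 2) := by positivity
  have hcs : 1 < -c * √(1 + k ^ 2) := by
    rw [lt_div_iff₀ hs] at hc
    linarith
  have hc0 : c < 0 := by nlinarith
  have hsq : 1 < c ^ 2 * (1 + k ^ 2) := by
    have := mul_self_lt_mul_self zero_le_one hcs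
    rwa [mul_mul_mul_comm, neg_mul_neg, Real.mul_self_sqrt (by positivity), one_mul, ← sq] at this
  have hc2 : c ^ 2 ≤ 1 := by nlinarith
  have hck2 : 0 < (c * k) ^ 2 := by nlinarith
  have hck : 0 < -(c * k) := by nlinarith [mul_nonpos_of_nonpos_of_nonneg hc0.le hk]
  have : √(1 - c ^ 2) < -(c * k) := (Real.sqrt_lt' hck).2 (by nlinarith)
  linarith

section InnerProductSpace

variable {E : Type*} [NormedAddCommGroup E] [InnerProductSpace ℝ E]

lemma real_inner_le_of_inner_eq_mul {g u v : E} (hu : u ≠ 0) {c k : ℝ}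
    (hc : ⟪g, u⟫ = c * (‖g‖ * ‖u‖)) (hk : ⟪u, v⟫ = k * (‖u‖ * ‖v‖)) :
    ⟪g, v⟫ ≤ ‖g‖ * ‖v‖ * (c * k + √(1 - c ^ 2)) := by
  have hu' : 0 < ‖u‖ := norm_pos_iff.mpr hu
  -- `c * ‖g‖ / ‖u‖ = ⟪g, u⟫ / ‖u‖ ^ 2`, so `w` is the component of `g` orthogonal to `u`.
  set w := g - (c * ‖g‖ / ‖u‖) • u
  have hw : ‖w‖ = ‖g‖ * √(1 - c ^ 2) := by
    have hw2 : ‖w‖ ^ 2 = ‖g‖ ^ 2 * (1 - c ^ 2) := by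
      rw [norm_sub_sq_real, inner_smul_right, norm_smul, hc, Real.norm_eq_abs, mul_pow, sq_abs]
      field_simp
      ring
    rw [← Real.sqrt_sq (norm_nonneg w), hw2, Real.sqrt_mul (sq_nonneg _),
      Real.sqrt_sq (norm_nonneg g)]
  have hsplit : ⟪g, v⟫ = ⟪w, v⟫ + ‖g‖ * ‖v‖ * (c * k) := by
    rw [inner_sub_left, real_inner_smul_left, hk]
    field_simp
    ring
  calc ⟪g, v⟫ = ⟪w, v⟫ + ‖g‖ * ‖v‖ * (c * k) := hsplit
    _ ≤ ‖w‖ * ‖v‖ + ‖g‖ * ‖v‖ * (c * k) := by gcongr; exact real_inner_le_norm w v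
    _ = ‖g‖ * ‖v‖ * (c * k + √(1 - c ^ 2)) := by rw [hw]; ring

theorem real_inner_neg_of_cos_lt {g u v : E} (hu : u ≠ 0) (hv : v ≠ 0) {k : ℝ} (hk0 : 0 ≤ k)
    (hk : ⟪u, v⟫ / (‖u‖ * ‖v‖) = k) (hc : ⟪g, u⟫ / (‖g‖ * ‖u‖) < -1 / √(1 + k ^ 2)) :
    ⟪g, v⟫ < 0 := by
  set c := ⟪g, u⟫ / (‖g‖ * ‖u‖) with hc_def
  have hg : g ≠ 0 := by
    rintro rfl
    have : -1 / √(1 + k ^ 2) < 0 := div_neg_of_neg_of_pos (by norm_num) (by positivity)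
    simp [c] at hc
    linarith
  have hgu : 0 < ‖g‖ * ‖u‖ := by positivity
  have huv : 0 < ‖u‖ * ‖v‖ := by positivity
  have hc₁ : -1 ≤ c := (abs_le.1 (abs_real_inner_div_norm_mul_norm_le_one g u)).1
  have hbound := real_inner_le_of_inner_eq_mul hu (c := c) (k := k)
    (by rw [hc_def, div_mul_cancel₀ _ hgu.ne']) (by rw [← hk, div_mul_cancel₀ _ huv.ne'])
  have := mul_add_sqrt_one_sub_sq_neg hk0 hc₁ hc
  nlinarith [mul_pos (norm_pos_iff.2 hg) (norm_pos_iff.2 hv)]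

end InnerProductSpace

namespace Matrix

variable {m n : Type*}

noncomputable def toEuclideanSpace (X : Matrix m n ℝ) : EuclideanSpace ℝ (m × n) :=
  WithLp.toLp 2 fun p => X p.1 p.2

lemma toEuclideanSpace_eq_zero {X : Matrix m n ℝ} : X.toEuclideanSpace = 0 ↔ X = 0 := by
  simp [toEuclideanSpace, funext_iff, ← Matrix.ext_iff]

lemma trace_transpose_mul_eq_inner [Fintype m] [Fintype n] (A B : Matrix m n ℝ) :
    trace (Aᵀ * B) = ⟪A.toEuclideanSpace, B.toEuclideanSpace⟫ := by
  simp only [trace, diag_apply, mul_apply, transpose_apply, toEuclideanSpace, PiLp.inner_apply,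
    RCLike.inner_apply, Real.ringHom_apply, mul_comm, Fintype.sum_prod_type]
  exact Finset.sum_comm

lemma norm_toEuclideanSpace_mul_of_orthogonal [Fintype m] [Fintype n] [DecidableEq m]
    {R : Matrix m m ℝ} (hR : Rᵀ * R = 1) (X : Matrix m n ℝ) :
    ‖(R * X).toEuclideanSpace‖ = ‖X.toEuclideanSpace‖ := by
  rw [← sq_eq_sq₀ (norm_nonneg _) (norm_nonneg _), ← real_inner_self_eq_norm_sq,
    ← real_inner_self_eq_norm_sq, ← trace_transpose_mul_eq_inner, ← trace_transpose_mul_eq_inner,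
    transpose_mul, Matrix.mul_assoc, ← Matrix.mul_assoc Rᵀ, hR, Matrix.one_mul]

lemma trace_mul_transpose_mul_transpose {l : Type*} [Fintype m] [Fintype n] [Fintype l]
    (M : Matrix m n ℝ) (F : Matrix l n ℝ) (R : Matrix m l ℝ) :
    trace (M * Fᵀ * Rᵀ) = trace (Mᵀ * (R * F)) := by
  rw [← trace_transpose, transpose_mul, transpose_mul, transpose_transpose, transpose_transpose,
    ← Matrix.mul_assoc, trace_mul_comm]

end Matrix

lemma frob_eq_norm_toEuclideanSpace {m n : ℕ} (X : Matrix (Fin m) (Fin n) ℝ) :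
    frob X = ‖X.toEuclideanSpace‖ := by
  simp [frob, EuclideanSpace.norm_eq, toEuclideanSpace, Fintype.sum_prod_type]

/-- Danger region of the polar scheme: with `V = R f(Rᵀ M)`,
`c = tr(Ḡᵀ M)/(‖Ḡ‖_F ‖M‖_F)` and `k = tr(M f(Rᵀ M)ᵀ Rᵀ)/(‖M‖_F ‖f(Rᵀ M)‖_F) ≥ 0`,
if `c < −1/√(1+k²)` then `⟨Ḡ, V⟩ = tr(Ḡᵀ V) < 0`. -/
theorem stmt15 {m n : ℕ} (Gbar M : Matrix (Fin m) (Fin n) ℝ) (hM : M ≠ 0)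
    (R : Matrix (Fin m) (Fin m) ℝ) (hR : Rᵀ * R = 1)
    (f : Matrix (Fin m) (Fin n) ℝ → Matrix (Fin m) (Fin n) ℝ)
    (hf : f (Rᵀ * M) ≠ 0)
    (c k : ℝ)
    (hc : c = Matrix.trace (Gbarᵀ * M) / (frob Gbar * frob M))
    (hk : k = Matrix.trace (M * (f (Rᵀ * M))ᵀ * Rᵀ) / (frob M * frob (f (Rᵀ * M))))
    (hk0 : 0 ≤ k)
    (hcond : c < -1 / Real.sqrt (1 + k ^ 2)) :
    Matrix.trace (Gbarᵀ * (R * f (Rᵀ * M))) < 0 := by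
  set F := f (Rᵀ * M)
  have hRF : R * F ≠ 0 := fun h => hf <| by
    rw [← Matrix.one_mul F, ← hR, Matrix.mul_assoc, h, Matrix.mul_zero]
  subst hc
  rw [trace_transpose_mul_eq_inner]
  refine real_inner_neg_of_cos_lt (toEuclideanSpace_eq_zero.not.2 hM)
    (toEuclideanSpace_eq_zero.not.2 hRF) hk0 ?_ ?_
  · rw [hk, trace_mul_transpose_mul_transpose, trace_transpose_mul_eq_inner,
      frob_eq_norm_toEuclideanSpace, frob_eq_norm_toEuclideanSpace,
      norm_toEuclideanSpace_mul_of_orthogonal hR]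
  · simpa only [trace_transpose_mul_eq_inner, frob_eq_norm_toEuclideanSpace] using hcond
end
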